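/- The limit as n → ∞ of the ratio (C_{n-3}⁴ · ((n-4)!)² · (n-1)² · (n-2) · (n-3)⁵ · (n-4)²) / (C_n⁴ · ((n+1)!)²) equals 1/2²⁴ (and in particular is positive). Here the numerator counts the pairs (u,v) of fully marked tree pair diagrams of size n of the special ping-pong form generating a free subgroup of rank 2 in Thompson's group V, and the denominator counts all pairs of fully marked tree pair diagrams of size n. -/

import Mathlib

/-!
Three steps of the recursion `(k + 2) C_{k+1} = 2 (2k + 1) C_k` express `C_n / C_{n-3}` as a
rational function of `n` tending to `4³ = 2⁶`, and `(n + 1)! / (n - 4)!` is a polynomial in `n`.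
Hence the ratio is a rational function of `n`, of degree 13 over degree 13, whose leading
coefficients are `1` and `(2⁶)⁴ = 2²⁴`.
-/

open Polynomial Filter Topology

theorem catalan_pos (n : ℕ) : 0 < catalan n :=
  Nat.pos_of_mul_pos_left ((succ_mul_catalan_eq_centralBinom n).symm ▸ n.centralBinom_pos)

theorem succ_succ_mul_catalan_succ (k : ℕ) :
    (k + 2) * catalan (k + 1) = 2 * (2 * k + 1) * catalan k := by
  refine Nat.eq_of_mul_eq_mul_left k.succ_pos ?_
  calc (k + 1) * ((k + 2) * catalan (k + 1))
      = (k + 1) * Nat.centralBinom (k + 1) := by rw [← succ_mul_catalan_eq_centralBinom]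
    _ = 2 * (2 * k + 1) * Nat.centralBinom k := Nat.succ_mul_centralBinom_succ k
    _ = (k + 1) * (2 * (2 * k + 1) * catalan k) := by rw [← succ_mul_catalan_eq_centralBinom]; ring

theorem catalan_add_three (k : ℕ) :
    (k + 2) * (k + 3) * (k + 4) * catalan (k + 3) =
      8 * (2 * k + 1) * (2 * k + 3) * (2 * k + 5) * catalan k := by
  have h₀ := succ_succ_mul_catalan_succ k
  have h₁ := succ_succ_mul_catalan_succ (k + 1)
  have h₂ := succ_succ_mul_catalan_succ (k + 2)
  calc (k + 2) * (k + 3) * (k + 4) * catalan (k + 3)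
      = (k + 2) * (k + 3) * ((k + 2 + 2) * catalan (k + 2 + 1)) := by ring
    _ = (k + 2) * (2 * (2 * k + 5)) * ((k + 1 + 2) * catalan (k + 1 + 1)) := by rw [h₂]; ring
    _ = 2 * (2 * k + 5) * (2 * (2 * k + 3)) * ((k + 2) * catalan (k + 1)) := by rw [h₁]; ring
    _ = 8 * (2 * k + 1) * (2 * k + 3) * (2 * k + 5) * catalan k := by rw [h₀]; ring

theorem tendsto_eval_natCast_div_eval_natCast {P Q : ℝ[X]} (hdeg : P.degree = Q.degree) :
    Tendsto (fun n : ℕ => P.eval (n : ℝ) / Q.eval (n : ℝ)) atTop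
      (𝓝 (P.leadingCoeff / Q.leadingCoeff)) :=
  (div_tendsto_atTop_leadingCoeff_div_of_degree_eq P Q hdeg).comp tendsto_natCast_atTop_atTop

/-- `freeDensityNum.eval m / freeDensityDen.eval m` is the density at size `m + 4`, in lowest
terms. -/
noncomputable def freeDensityNum : ℝ[X] :=
  X ^ 2 * (X + C 1) ^ 3 * (X + C 3) ^ 4 * (X + C 4) ^ 2 * (X + C 5) ^ 2

noncomputable def freeDensityDen : ℝ[X] :=
  C (2 ^ 24) * ((X + C 2) * ((X + C (3 / 2)) * (X + C (5 / 2)) * (X + C (7 / 2))) ^ 4)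

theorem freeDensityNum_monic : freeDensityNum.Monic := by
  unfold freeDensityNum
  have := monic_X_add_C (1 : ℝ)
  have := monic_X_add_C (3 : ℝ)
  have := monic_X_add_C (4 : ℝ)
  have := monic_X_add_C (5 : ℝ)
  monicity!

theorem freeDensityDen_leadingCoeff : freeDensityDen.leadingCoeff = 2 ^ 24 := by
  have hmonic :
      ((X + C (2 : ℝ)) * ((X + C (3 / 2)) * (X + C (5 / 2)) * (X + C (7 / 2))) ^ 4).Monic := by
    have := monic_X_add_C (2 : ℝ)
    have := monic_X_add_C (3 / 2 : ℝ)
    have := monic_X_add_C (5 / 2 : ℝ)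
    have := monic_X_add_C (7 / 2 : ℝ)
    monicity!
  rw [freeDensityDen, leadingCoeff_mul, leadingCoeff_C, hmonic.leadingCoeff, mul_one]

theorem freeDensity_degree_eq : freeDensityNum.degree = freeDensityDen.degree := by
  have hnum : freeDensityNum.degree = 13 := by unfold freeDensityNum; compute_degree!
  have hden : freeDensityDen.degree = 13 := by unfold freeDensityDen; compute_degree!
  rw [hnum, hden]

theorem freeDensity_eq (m : ℕ) :
    ((catalan (m + 4 - 3) ^ 4 * Nat.factorial (m + 4 - 4) ^ 2 * (m + 4 - 1) ^ 2 *
        (m + 4 - 2) * (m + 4 - 3) ^ 5 * (m + 4 - 4) ^ 2 : ℕ) : ℝ) /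
      ((catalan (m + 4) ^ 4 * Nat.factorial (m + 4 + 1) ^ 2 : ℕ) : ℝ) =
      freeDensityNum.eval (m : ℝ) / freeDensityDen.eval (m : ℝ) := by
  simp only [Nat.add_sub_cancel, show m + 4 - 3 = m + 1 by omega, show m + 4 - 1 = m + 3 by omega,
    show m + 4 - 2 = m + 2 by omega]
  have hfact : ((m + 4 + 1).factorial : ℝ) =
      (m + 5) * (m + 4) * (m + 3) * (m + 2) * (m + 1) * m.factorial := by
    push_cast [Nat.factorial_succ]; ring
  have hd : (catalan (m + 4) : ℝ) =
      8 * (2 * m + 3) * (2 * m + 5) * (2 * m + 7) * catalan (m + 1) /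
        ((m + 3) * (m + 4) * (m + 5)) := by
    rw [eq_div_iff (by positivity), mul_comm]
    exact_mod_cast catalan_add_three (m + 1)
  simp only [freeDensityNum, freeDensityDen, eval_mul, eval_pow, eval_add, eval_X, eval_C]
  push_cast
  have hc : (catalan (m + 1) : ℝ) ≠ 0 := by exact_mod_cast (catalan_pos _).ne'
  rw [hd, hfact]
  field_simp
  ring

/-- The fraction of ping-pong pairs generating a free subgroup of rank 2 in
Thompson's group `V`, namely
`C_{n-3}⁴·((n-4)!)²·(n-1)²·(n-2)·(n-3)⁵·(n-4)²` out of all `C_n⁴·((n+1)!)²`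
pairs of fully marked tree pair diagrams of size `n`, tends to `1/2²⁴`. -/
theorem density_free_V :
    Filter.Tendsto
      (fun n : ℕ => ((catalan (n - 3) ^ 4 * Nat.factorial (n - 4) ^ 2 * (n - 1) ^ 2 *
          (n - 2) * (n - 3) ^ 5 * (n - 4) ^ 2 : ℕ) : ℝ) /
        ((catalan n ^ 4 * Nat.factorial (n + 1) ^ 2 : ℕ) : ℝ))
      Filter.atTop (nhds (1 / 2 ^ 24)) := by
  rw [← tendsto_add_atTop_iff_nat 4]
  have h := tendsto_eval_natCast_div_eval_natCast freeDensity_degree_eq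
  rw [freeDensityNum_monic.leadingCoeff, freeDensityDen_leadingCoeff] at h
  exact h.congr fun m => (freeDensity_eq m).symm
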